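/- For every m ≥ 1 and every assignment of the variables x_1, …, x_{2m+1} to elements of S_7, the element x_1x_2 + x_2x_3 + ⋯ + x_{2m}x_{2m+1} + x_{2m+1}x_1 computed in S_7 equals x_1x_2 + ⋯ + x_{2m+1}x_1 + x_1x_2⋯x_{2m+1}; i.e., the odd-cycle identity U_m ≈ U_m + x_1⋯x_{2m+1} holds in S_7. -/

import Mathlib

/-!
A sum in `S₇` is nonzero only if all its terms are equal, so if `U_m ≠ 0` every edge product
`xᵢxᵢ₊₁` equals the same `c ≠ 0`. For `c = 1` all `xᵢ = 1` and the full product is `1 = U_m`.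
For `c = a` each edge joins a `1` to an `a`, i.e. `xᵢ₊₁` is obtained from `xᵢ` by swapping
`1` and `a`; going once around the cycle applies this involution an odd number of times,
which is impossible.
-/

/-- The 3-element ai-semiring `S₇ = {1, a, 0}`. -/
inductive S7 | one | a | zero
deriving DecidableEq

/-- Addition of `S₇`: idempotent, and all sums of distinct elements equal `0`. -/
def add7 : S7 → S7 → S7 := fun x y => if x = y then x else .zero

/-- Multiplication of `S₇`: `1` is an identity, `a·a = a·0 = 0·0 = 0`. -/
def mul7 : S7 → S7 → S7
  | .one, y => y
  | x, .one => x
  | _, _ => .zero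

/-- Sum of a nonempty list in a semigroup (`none` only for the empty list). -/
def sum7 : List S7 → Option S7
  | [] => none
  | s :: t => some (t.foldl add7 s)

section Cycle

variable {n : ℕ} [NeZero n] {α : Type*} {σ : α → α} {φ : Fin n → α}

open Fin.NatCast in
theorem Fin.apply_add_natCast_eq_iterate (h : ∀ i, φ (i + 1) = σ (φ i)) (k : ℕ) (i : Fin n) :
    φ (i + k) = σ^[k] (φ i) := by
  induction k with
  | zero => simp
  | succ k ih =>
    rw [Nat.cast_succ, ← add_assoc, h, ih, Function.iterate_succ_apply']

open Fin.NatCast in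
theorem Fin.even_of_forall_apply_add_one_eq (hσ : Function.Involutive σ)
    (h : ∀ i, φ (i + 1) = σ (φ i)) {i : Fin n} (hi : σ (φ i) ≠ φ i) : Even n := by
  by_contra hn
  have hround := Fin.apply_add_natCast_eq_iterate h n i
  rw [Fin.natCast_self, add_zero, hσ.iterate_odd (Nat.not_even_iff_odd.mp hn)] at hround
  exact hi hround.symm

end Cycle

namespace S7

theorem add7_eq_left_iff {x y : S7} : add7 x y = x ↔ x = .zero ∨ y = x := by
  cases x <;> cases y <;> decide

theorem mul7_eq_one_iff {x y : S7} : mul7 x y = .one ↔ x = .one ∧ y = .one := by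
  cases x <;> cases y <;> decide

theorem eq_swap_of_mul7_eq_a {x y : S7} (h : mul7 x y = .a) :
    y = Equiv.swap .one .a x ∧ Equiv.swap .one .a x ≠ x := by
  cases x <;> cases y <;> simp_all [mul7]

theorem exists_sum7_eq_some {l : List S7} (hl : l ≠ []) : ∃ c, sum7 l = some c := by
  cases l with
  | nil => exact absurd rfl hl
  | cons s t => exact ⟨_, rfl⟩

theorem sum7_append_singleton {l : List S7} {c : S7} (h : sum7 l = some c) (p : S7) :
    sum7 (l ++ [p]) = some (add7 c p) := by
  cases l with
  | nil => cases h
  | cons s t =>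
    simp only [sum7, Option.some.injEq] at h
    simp [sum7, List.foldl_append, h]

theorem foldl_add7_zero (t : List S7) : t.foldl add7 .zero = .zero := by
  induction t with
  | nil => rfl
  | cons y t ih => cases y <;> exact ih

theorem forall_mem_eq_of_foldl_add7_ne_zero {s : S7} {t : List S7}
    (h : t.foldl add7 s ≠ .zero) : ∀ x ∈ s :: t, x = t.foldl add7 s := by
  induction t generalizing s with
  | nil => simp
  | cons y t ih =>
    rw [List.foldl_cons] at h ⊢
    have hsy : add7 s y ≠ .zero := fun h0 => h (by rw [h0, foldl_add7_zero])
    have hy : y = s := by by_contra hne; exact hsy (if_neg (Ne.symm hne))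
    subst hy
    rw [show add7 y y = y from if_pos rfl] at h ⊢
    simpa using ih h

theorem eq_of_mem_of_sum7_eq_some {l : List S7} {c : S7} (h : sum7 l = some c)
    (hc : c ≠ .zero) : ∀ x ∈ l, x = c := by
  cases l with
  | nil => cases h
  | cons s t =>
    simp only [sum7, Option.some.injEq] at h
    subst h
    exact forall_mem_eq_of_foldl_add7_ne_zero hc

theorem foldr_mul7_eq_one {l : List S7} (h : ∀ x ∈ l, x = .one) :
    l.foldr mul7 .one = .one := by
  induction l with
  | nil => rfl
  | cons y l ih =>
    rw [List.foldr_cons, ih fun x hx => h x (List.mem_cons_of_mem y hx),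
      h y List.mem_cons_self]
    rfl

theorem not_forall_mul7_succ_eq_a {m : ℕ} (φ : Fin (2 * m + 1) → S7) :
    ¬ ∀ i, mul7 (φ i) (φ (i + 1)) = .a := fun h =>
  Nat.not_even_two_mul_add_one m <|
    Fin.even_of_forall_apply_add_one_eq (Equiv.swap_apply_self _ _)
      (fun i => (eq_swap_of_mul7_eq_a (h i)).1) (eq_swap_of_mul7_eq_a (h 0)).2

end S7

open S7 in
theorem stmt17_general (m : ℕ) (φ : Fin (2 * m + 1) → S7) :
    sum7 ((List.finRange (2 * m + 1)).map (fun i => mul7 (φ i) (φ (i + 1)))) =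
    sum7 ((List.finRange (2 * m + 1)).map (fun i => mul7 (φ i) (φ (i + 1))) ++
      [((List.finRange (2 * m + 1)).map φ).foldr mul7 S7.one]) := by
  obtain ⟨c, hc⟩ := exists_sum7_eq_some (l := (List.finRange (2 * m + 1)).map
    (fun i => mul7 (φ i) (φ (i + 1)))) (by simp)
  rw [hc, sum7_append_singleton hc, Option.some_inj, eq_comm, add7_eq_left_iff]
  by_contra! h
  have hedge (i : Fin (2 * m + 1)) : mul7 (φ i) (φ (i + 1)) = c :=
    eq_of_mem_of_sum7_eq_some hc h.1 _ (List.mem_map_of_mem (List.mem_finRange i))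
  cases c with
  | zero => exact h.1 rfl
  | a => exact not_forall_mul7_succ_eq_a φ hedge
  | one =>
    refine h.2 (foldr_mul7_eq_one fun x hx => ?_)
    obtain ⟨i, -, rfl⟩ := List.mem_map.mp hx
    exact (mul7_eq_one_iff.mp (hedge i)).1

/-- For every `m ≥ 1`, the odd-cycle identity
`x₁x₂ + x₂x₃ + ⋯ + x₂ₘx₂ₘ₊₁ + x₂ₘ₊₁x₁ ≈ x₁x₂ + ⋯ + x₂ₘ₊₁x₁ + x₁x₂⋯x₂ₘ₊₁`
holds in `S₇` (indices modulo `2m+1`; the full product is folded with the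
multiplicative identity `1`). -/
theorem stmt17 (m : ℕ) (hm : 1 ≤ m) (φ : Fin (2 * m + 1) → S7) :
    sum7 ((List.finRange (2 * m + 1)).map (fun i => mul7 (φ i) (φ (i + 1)))) =
    sum7 ((List.finRange (2 * m + 1)).map (fun i => mul7 (φ i) (φ (i + 1))) ++
      [((List.finRange (2 * m + 1)).map φ).foldr mul7 S7.one]) :=
  stmt17_general m φ
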